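/- arXiv:1410.6973 — 4 statements merged into one kernel-verified Lean document; each statement's English description precedes it below -/
import Mathlib

section
/- Let D be a finite set of n points, let w : D → [0,1], and suppose (1/n) Σ_{d ∈ D} w_d ≥ e² + (1 − e)², where e = 1 − ε for some 0 < ε ≤ 1/2. Let K > 0 and 0 < δ < 1/2 satisfy δ + 1/K < 1/2, and let μ = |{d ∈ D : w_d ≥ 1/2 + δ + 1/K}| / n. Then μ ≥ 1 − (2ε − 2ε²)/(1/2 − δ − 1/K). -/
/-- if the average weight of the points of `D` is at least `e² + (1-e)²`
where `e = 1 - ε`, `0 < ε ≤ 1/2`, then for `K > 0`, `0 < δ < 1/2` with `δ + 1/K < 1/2`,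
the fraction `μ` of points of weight at least `1/2 + δ + 1/K` satisfies
`μ ≥ 1 - (2ε - 2ε²)/(1/2 - δ - 1/K)`. -/
theorem fraction_of_heavy_points_dp
    {α : Type*} (D : Finset α) (w : α → ℝ)
    (hw : ∀ d ∈ D, w d ∈ Set.Icc (0 : ℝ) 1)
    (ε : ℝ) (hε0 : 0 < ε) (hε : ε ≤ 1 / 2)
    (havg : (1 / (D.card : ℝ)) * ∑ d ∈ D, w d ≥ (1 - ε) ^ 2 + (1 - (1 - ε)) ^ 2)
    (K δ : ℝ) (hK : 0 < K) (hδ0 : 0 < δ) (hδ : δ < 1 / 2)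
    (hδK : δ + 1 / K < 1 / 2)
    (μ : ℝ)
    (hμ : μ = ((D.filter fun d => 1 / 2 + δ + 1 / K ≤ w d).card : ℝ) / (D.card : ℝ)) :
    μ ≥ 1 - (2 * ε - 2 * ε ^ 2) / (1 / 2 - δ - 1 / K) := by
  classical
  set t : ℝ := 1 / 2 + δ + 1 / K with ht
  have htpos : 0 < t := by positivity
  have ht1 : t < 1 := by simp only [ht]; linarith
  rcases Nat.eq_zero_or_pos D.card with h0 | hpos
  · exfalso
    have hD : D = ∅ := Finset.card_eq_zero.mp h0
    rw [hD] at havg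
    simp at havg
    nlinarith [sq_nonneg (1 - ε), sq_nonneg ε]
  have hn : (0 : ℝ) < (D.card : ℝ) := by exact_mod_cast hpos
  set S := D.filter fun d => t ≤ w d with hS
  set m : ℝ := (S.card : ℝ) with hm
  have hsplit : ∑ d ∈ D, w d =
      ∑ d ∈ S, w d + ∑ d ∈ D.filter (fun d => ¬ t ≤ w d), w d :=
    (Finset.sum_filter_add_sum_filter_not D _ w).symm
  have h1 : ∑ d ∈ S, w d ≤ m := by
    rw [hm]
    calc ∑ d ∈ S, w d ≤ ∑ _d ∈ S, (1 : ℝ) :=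
          Finset.sum_le_sum fun d hd => (hw d (Finset.mem_filter.mp hd).1).2
      _ = (S.card : ℝ) := by simp
  have h2 : ∑ d ∈ D.filter (fun d => ¬ t ≤ w d), w d ≤
      ((D.filter (fun d => ¬ t ≤ w d)).card : ℝ) * t := by
    calc ∑ d ∈ D.filter (fun d => ¬ t ≤ w d), w d
        ≤ ∑ _d ∈ D.filter (fun d => ¬ t ≤ w d), t :=
          Finset.sum_le_sum fun d hd =>
            le_of_lt (lt_of_not_ge (Finset.mem_filter.mp hd).2)
      _ = _ := by rw [Finset.sum_const, nsmul_eq_mul]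
  have hcard : ((D.filter (fun d => ¬ t ≤ w d)).card : ℝ) = (D.card : ℝ) - m := by
    rw [hm, hS]
    have := Finset.card_filter_add_card_filter_not (s := D)
      (p := fun d => t ≤ w d)
    push_cast [← this]
    ring
  have hsum : (D.card : ℝ) * ((1 - ε) ^ 2 + ε ^ 2) ≤ ∑ d ∈ D, w d := by
    have := havg
    rw [ge_iff_le, div_mul_eq_mul_div, one_mul, le_div_iff₀ hn] at this
    nlinarith [this]
  have key : (D.card : ℝ) * ((1 - ε) ^ 2 + ε ^ 2) ≤ m + ((D.card : ℝ) - m) * t := by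
    calc (D.card : ℝ) * ((1 - ε) ^ 2 + ε ^ 2) ≤ ∑ d ∈ D, w d := hsum
      _ = _ := hsplit
      _ ≤ m + ((D.card : ℝ) - m) * t := by rw [← hcard]; linarith
  rw [hμ]
  have h1t : (0 : ℝ) < 1 - t := by linarith
  have hden : (1 : ℝ) / 2 - δ - 1 / K = 1 - t := by rw [ht]; ring
  set q : ℝ := (2 * ε - 2 * ε ^ 2) / (1 - t) with hq
  have hq1 : q * (1 - t) = 2 * ε - 2 * ε ^ 2 := div_mul_cancel₀ _ (ne_of_gt h1t)
  rw [hden, ge_iff_le, le_div_iff₀ hn]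
  nlinarith [key, hq1, hn]
end

section
/- Let n ≥ 2 be an integer, let D be a finite set of n points, and let w : D → [0,1] satisfy (1/n) Σ_{d ∈ D} w_d ≥ 1 − 2ε + 2ε² for some 0 < ε ≤ 1/2. Fix C > 0, 0 < δ < 1/2, and an integer k ≥ (1+C) ln(n) / (2δ²). For each d ∈ D let X₁^d, …, X_k^d be random variables on a common probability space such that for each fixed d the family (X_i^d)_{i=1}^k is independent, each X_i^d takes values in [0,1], and E[X_i^d] = w_d. Then with probability at least 1 − n^{−C}, the number of points d ∈ D with (1/k) Σ_{i=1}^k X_i^d ≤ 1/2 is at most n · (2ε − 2ε²)/(1/2 − δ). -/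
/-!
Call a point good if its weight exceeds `1/2 + δ`. By Hoeffding's inequality a good point has
average score at most `1/2` with probability at most `exp (-2kδ²) ≤ n^(-1-C)`, so by the union
bound, with probability at least `1 - n^(-C)` only non-good points are misclassified. By Markov's
inequality applied to the losses `1 - w d`, whose total is at most `n (2ε - 2ε²)`, there are at
most `n (2ε - 2ε²) / (1/2 - δ)` non-good points.
-/

open MeasureTheory ProbabilityTheory Real Finset
open scoped NNReal ENNReal

theorem card_filter_le_sum_div {α : Type*} {s : Finset α} {f : α → ℝ} (hf : ∀ x ∈ s, 0 ≤ f x)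
    {a : ℝ} (ha : 0 < a) [DecidablePred (a ≤ f ·)] :
    (#{x ∈ s | a ≤ f x} : ℝ) ≤ (∑ x ∈ s, f x) / a := by
  rw [le_div_iff₀ ha]
  calc (#{x ∈ s | a ≤ f x} : ℝ) * a = ∑ _x ∈ s with a ≤ f _x, a := by
        rw [sum_const, nsmul_eq_mul]
    _ ≤ ∑ x ∈ s with a ≤ f x, f x := sum_le_sum fun x hx ↦ (mem_filter.1 hx).2
    _ ≤ ∑ x ∈ s, f x := sum_le_sum_of_subset_of_nonneg (filter_subset _ _) fun x hx _ ↦ hf x hx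

theorem mul_exp_neg_le_rpow_neg {x C t : ℝ} (hx : 0 < x) (ht : (1 + C) * log x ≤ t) :
    x * exp (-t) ≤ x ^ (-C) :=
  calc x * exp (-t) = exp (log x - t) := by rw [exp_sub, exp_log hx, div_eq_mul_inv, exp_neg]
    _ ≤ exp (log x * -C) := exp_le_exp.2 (by linarith)
    _ = x ^ (-C) := (rpow_def_of_pos hx _).symm

section Probability

variable {Ω ι : Type*} [MeasurableSpace Ω] {μ : Measure Ω} [IsProbabilityMeasure μ]

theorem measureReal_sum_le_sum_integral_sub_le {Y : ι → Ω → ℝ} (hind : iIndepFun Y μ)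
    (hmeas : ∀ i, AEMeasurable (Y i) μ) {a b : ℝ} (hY : ∀ i, ∀ᵐ ω ∂μ, Y i ω ∈ Set.Icc a b)
    (s : Finset ι) {t : ℝ} (ht : 0 ≤ t) :
    μ.real {ω | ∑ i ∈ s, Y i ω ≤ ∑ i ∈ s, μ[Y i] - t} ≤
      exp (-2 * t ^ 2 / (#s * (b - a) ^ 2)) := by
  have hsub : ∀ i ∈ s, HasSubgaussianMGF (fun ω ↦ μ[Y i] - Y i ω) ((‖b - a‖₊ / 2) ^ 2) μ :=
    fun i _ ↦ (hasSubgaussianMGF_of_mem_Icc (hmeas i) (hY i)).neg.congr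
      (ae_of_all _ fun ω ↦ by simp)
  have hind' : iIndepFun (fun i ω ↦ μ[Y i] - Y i ω) μ :=
    hind.comp (fun i x ↦ (∫ ω, Y i ω ∂μ) - x) fun _ ↦ measurable_const.sub measurable_id
  convert HasSubgaussianMGF.measure_sum_ge_le_of_iIndepFun hind' hsub ht using 2
  · ext ω
    simp only [Set.mem_ofPred_eq, sum_sub_distrib]
    constructor <;> intro h <;> linarith
  · have hvar : 2 * ((∑ _i ∈ s, (‖b - a‖₊ / 2) ^ 2 : ℝ≥0) : ℝ) = #s * (b - a) ^ 2 / 2 := by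
      simp only [sum_const, nsmul_eq_mul, NNReal.coe_mul, NNReal.coe_natCast, NNReal.coe_pow,
        NNReal.coe_div, coe_nnnorm, Real.norm_eq_abs, div_pow, sq_abs, NNReal.coe_ofNat]
      ring
    rw [hvar, div_div_eq_mul_div]
    ring

theorem measure_mean_le_half_le_exp {k : ℕ} {Y : Fin k → Ω → ℝ} (hind : iIndepFun Y μ)
    (hmeas : ∀ i, Measurable (Y i)) (hY : ∀ i ω, Y i ω ∈ Set.Icc (0 : ℝ) 1) {m δ : ℝ}
    (hmean : ∀ i, μ[Y i] = m) (hδ : 0 ≤ δ) (hm : 1 / 2 + δ ≤ m) :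
    μ {ω | (1 / (k : ℝ)) * ∑ i, Y i ω ≤ 1 / 2} ≤ ENNReal.ofReal (exp (-(2 * k * δ ^ 2))) := by
  rcases Nat.eq_zero_or_pos k with rfl | hk
  · simp
  have hk' : (0 : ℝ) < k := Nat.cast_pos.2 hk
  have hsub : {ω | (1 / (k : ℝ)) * ∑ i, Y i ω ≤ 1 / 2} ⊆
      {ω | ∑ i, Y i ω ≤ ∑ i, μ[Y i] - k * δ} := by
    intro ω hω
    rw [Set.mem_ofPred_eq, one_div_mul_eq_div, div_le_iff₀ hk'] at hω
    simp only [Set.mem_ofPred_eq, hmean, sum_const, card_univ, Fintype.card_fin, nsmul_eq_mul]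
    nlinarith
  calc μ {ω | (1 / (k : ℝ)) * ∑ i, Y i ω ≤ 1 / 2}
      ≤ ENNReal.ofReal (μ.real {ω | ∑ i, Y i ω ≤ ∑ i, μ[Y i] - k * δ}) := by
        rw [ofReal_measureReal]; exact measure_mono hsub
    _ ≤ ENNReal.ofReal (exp (-2 * (k * δ) ^ 2 / (#(univ : Finset (Fin k)) * (1 - 0) ^ 2))) :=
        ENNReal.ofReal_le_ofReal <| measureReal_sum_le_sum_integral_sub_le hind
          (fun i ↦ (hmeas i).aemeasurable) (fun i ↦ ae_of_all _ (hY i)) _ (by positivity)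
    _ = ENNReal.ofReal (exp (-(2 * k * δ ^ 2))) := by
        rw [card_univ, Fintype.card_fin, sub_zero, one_pow, mul_one]
        field_simp

theorem one_sub_card_mul_le_measure_card_filter_le {α : Type*} (D : Finset α)
    (P : α → Ω → Prop) [∀ ω, DecidablePred (P · ω)] (Q : α → Prop) [DecidablePred Q]
    {p : ℝ≥0∞} (hp : ∀ d ∈ D, ¬Q d → μ {ω | P d ω} ≤ p) :
    1 - #D * p ≤ μ {ω | #{d ∈ D | P d ω} ≤ #{d ∈ D | Q d}} := by
  set E := ⋃ d ∈ D.filter (¬Q ·), {ω | P d ω}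
  have hE : Eᶜ ⊆ {ω | #{d ∈ D | P d ω} ≤ #{d ∈ D | Q d}} := by
    intro ω hω
    refine card_le_card fun d hd ↦ ?_
    rw [mem_filter] at hd ⊢
    by_contra hQ
    exact hω (Set.mem_biUnion (mem_filter.2 ⟨hd.1, fun h ↦ hQ ⟨hd.1, h⟩⟩) hd.2)
  have hμE : μ E ≤ #D * p :=
    calc μ E ≤ ∑ d ∈ D with ¬Q d, μ {ω | P d ω} := measure_biUnion_finset_le _ _
      _ ≤ ∑ _d ∈ D with ¬Q _d, p :=
        sum_le_sum fun d hd ↦ hp d (mem_filter.1 hd).1 (mem_filter.1 hd).2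
      _ ≤ #D * p := by
        rw [sum_const, nsmul_eq_mul]
        gcongr
        exact filter_subset _ _
  calc 1 - #D * p ≤ 1 - μ E := tsub_le_tsub_left hμE 1
    _ ≤ μ Eᶜ := by
        rw [tsub_le_iff_left, ← measure_univ (μ := μ)]
        exact measure_univ_le_add_compl E
    _ ≤ _ := measure_mono hE

end Probability

open Classical in
theorem empirical_error_threshold_averaging_general
    {Ω α : Type*} [MeasurableSpace Ω] (μ : Measure Ω) [IsProbabilityMeasure μ]
    (n : ℕ) (hn : 2 ≤ n) (D : Finset α) (hD : D.card = n)
    (w : α → ℝ) (hw : ∀ d ∈ D, w d ∈ Set.Icc (0 : ℝ) 1)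
    (ε : ℝ)
    (havg : (1 / (n : ℝ)) * ∑ d ∈ D, w d ≥ 1 - 2 * ε + 2 * ε ^ 2)
    (C δ : ℝ) (hδ0 : 0 < δ) (hδ : δ < 1 / 2)
    (k : ℕ) (hk : (1 + C) * Real.log n / (2 * δ ^ 2) ≤ (k : ℝ))
    (X : α → Fin k → Ω → ℝ)
    (hmeas : ∀ d ∈ D, ∀ i, Measurable (X d i))
    (hindep : ∀ d ∈ D, iIndepFun (X d) μ)
    (hrange : ∀ d ∈ D, ∀ i, ∀ ω, X d i ω ∈ Set.Icc (0 : ℝ) 1)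
    (hmean : ∀ d ∈ D, ∀ i, ∫ ω, X d i ω ∂μ = w d) :
    μ {ω | ((D.filter fun d => (1 / (k : ℝ)) * ∑ i, X d i ω ≤ 1 / 2).card : ℝ) ≤
        (n : ℝ) * (2 * ε - 2 * ε ^ 2) / (1 / 2 - δ)} ≥
      1 - ENNReal.ofReal ((n : ℝ) ^ (-C)) := by
  have hn0 : (0 : ℝ) < n := by norm_cast; omega
  have hloss : ∑ d ∈ D, (1 - w d) ≤ n * (2 * ε - 2 * ε ^ 2) := by
    rw [ge_iff_le, one_div_mul_eq_div, le_div_iff₀ hn0] at havg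
    rw [sum_sub_distrib, sum_const, hD, nsmul_one]
    linarith
  have hcard : (#{d ∈ D | 1 / 2 - δ ≤ 1 - w d} : ℝ) ≤ n * (2 * ε - 2 * ε ^ 2) / (1 / 2 - δ) :=
    (card_filter_le_sum_div (fun d hd ↦ sub_nonneg.2 (hw d hd).2) (by linarith)).trans
      (div_le_div_of_nonneg_right hloss (by linarith))
  have hexp : #D * ENNReal.ofReal (exp (-(2 * k * δ ^ 2))) ≤ ENNReal.ofReal ((n : ℝ) ^ (-C)) := by
    rw [hD, ← ENNReal.ofReal_natCast, ← ENNReal.ofReal_mul hn0.le]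
    refine ENNReal.ofReal_le_ofReal (mul_exp_neg_le_rpow_neg hn0 ?_)
    rw [div_le_iff₀ (by positivity)] at hk
    linarith
  calc 1 - ENNReal.ofReal ((n : ℝ) ^ (-C))
      ≤ 1 - #D * ENNReal.ofReal (exp (-(2 * k * δ ^ 2))) := tsub_le_tsub_left hexp 1
    _ ≤ μ {ω | #{d ∈ D | (1 / (k : ℝ)) * ∑ i, X d i ω ≤ 1 / 2} ≤
          #{d ∈ D | 1 / 2 - δ ≤ 1 - w d}} :=
        one_sub_card_mul_le_measure_card_filter_le D _ _ fun d hd hbad ↦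
          measure_mean_le_half_le_exp (hindep d hd) (hmeas d hd) (hrange d hd) (hmean d hd)
            hδ0.le (by linarith [not_le.1 hbad])
    _ ≤ _ := measure_mono fun ω hω ↦ (Nat.cast_le.2 hω).trans hcard

open Classical in
/-- empirical error bound for threshold averaging: if the average weight of
the `n` points of `D` is at least `1 - 2ε + 2ε²`, and for each `d` the scores
`X d 1, …, X d k` are independent `[0,1]`-valued with mean `w d`, where
`k ≥ (1+C) ln n / (2δ²)`, then with probability at least `1 - n^(-C)` at most
`n (2ε - 2ε²)/(1/2 - δ)` points have average score at most `1/2`. -/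
theorem empirical_error_threshold_averaging
    {Ω α : Type*} [MeasurableSpace Ω] (μ : Measure Ω) [IsProbabilityMeasure μ]
    (n : ℕ) (hn : 2 ≤ n) (D : Finset α) (hD : D.card = n)
    (w : α → ℝ) (hw : ∀ d ∈ D, w d ∈ Set.Icc (0 : ℝ) 1)
    (ε : ℝ) (hε0 : 0 < ε) (hε : ε ≤ 1 / 2)
    (havg : (1 / (n : ℝ)) * ∑ d ∈ D, w d ≥ 1 - 2 * ε + 2 * ε ^ 2)
    (C δ : ℝ) (hC : 0 < C) (hδ0 : 0 < δ) (hδ : δ < 1 / 2)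
    (k : ℕ) (hk : (1 + C) * Real.log n / (2 * δ ^ 2) ≤ (k : ℝ))
    (X : α → Fin k → Ω → ℝ)
    (hmeas : ∀ d ∈ D, ∀ i, Measurable (X d i))
    (hindep : ∀ d ∈ D, iIndepFun (X d) μ)
    (hrange : ∀ d ∈ D, ∀ i, ∀ ω, X d i ω ∈ Set.Icc (0 : ℝ) 1)
    (hmean : ∀ d ∈ D, ∀ i, ∫ ω, X d i ω ∂μ = w d) :
    μ {ω | ((D.filter fun d => (1 / (k : ℝ)) * ∑ i, X d i ω ≤ 1 / 2).card : ℝ) ≤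
        (n : ℝ) * (2 * ε - 2 * ε ^ 2) / (1 / 2 - δ)} ≥
      1 - ENNReal.ofReal ((n : ℝ) ^ (-C)) :=
  empirical_error_threshold_averaging_general μ n hn D hD w hw ε havg C δ hδ0 hδ k hk X hmeas hindep
    hrange hmean
end

section
/- Let n ≥ 1 be a real number, 0 < δ ≤ 1/2, n_a > 0, and 0 ≤ r ≤ n_a. Let g₁, g₂ be real numbers with |g₁| ≤ (δ/24) · n_a / √n and |g₂| ≤ (δ/24) · n_a / √n. Then n_a + g₁ + g₂ > 0 and | (r + g₁)/(n_a + g₁ + g₂) − r/n_a | ≤ δ/(4√n). -/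
open Real

/-- stability of a leaf's label ratio under small perturbations of its
counts: if `|g₁|, |g₂| ≤ (δ/24) nₐ / √n` with `n ≥ 1`, `0 < δ ≤ 1/2`, `nₐ > 0`,
`0 ≤ r ≤ nₐ`, then `nₐ + g₁ + g₂ > 0` and
`|(r + g₁)/(nₐ + g₁ + g₂) - r/nₐ| ≤ δ/(4√n)`. -/
theorem perturbed_ratio_bound
    (n δ na r g₁ g₂ : ℝ)
    (hn : 1 ≤ n) (hδ0 : 0 < δ) (hδ : δ ≤ 1 / 2)
    (hna : 0 < na) (hr0 : 0 ≤ r) (hr : r ≤ na)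
    (hg₁ : |g₁| ≤ δ / 24 * na / Real.sqrt n)
    (hg₂ : |g₂| ≤ δ / 24 * na / Real.sqrt n) :
    0 < na + g₁ + g₂ ∧
      |(r + g₁) / (na + g₁ + g₂) - r / na| ≤ δ / (4 * Real.sqrt n) := by
  have hs : 1 ≤ Real.sqrt n := by
    have := Real.sqrt_le_sqrt hn
    simpa using this
  have hs0 : 0 < Real.sqrt n := lt_of_lt_of_le one_pos hs
  set ε := δ / 24 * na / Real.sqrt n with hε
  have hε48 : ε ≤ na / 48 := by
    have h1 : δ / 24 * na ≤ na / 48 := by nlinarith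
    have h2 : ε ≤ δ / 24 * na := by
      rw [hε, div_le_iff₀ hs0]
      nlinarith [mul_pos (mul_pos (by linarith : (0:ℝ) < δ/24) hna) hs0,
        mul_nonneg (mul_nonneg (by linarith : (0:ℝ) ≤ δ/24) hna.le) (by linarith : (0:ℝ) ≤ Real.sqrt n - 1)]
    linarith
  have hg1' := abs_le.mp hg₁
  have hg2' := abs_le.mp hg₂
  have hD : 0 < na + g₁ + g₂ := by
    have := hg1'.1; have := hg2'.1
    nlinarith
  refine ⟨hD, ?_⟩
  have hDlb : 23 / 24 * na ≤ na + g₁ + g₂ := by nlinarith [hg1'.1, hg2'.1]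
  have key : (r + g₁) / (na + g₁ + g₂) - r / na
      = ((na - r) * g₁ - r * g₂) / ((na + g₁ + g₂) * na) := by
    field_simp
    ring
  rw [key, abs_div]
  have hden : |(na + g₁ + g₂) * na| = (na + g₁ + g₂) * na := by
    rw [abs_of_pos (mul_pos hD hna)]
  rw [hden, div_le_iff₀ (mul_pos hD hna)]
  have hnum : |(na - r) * g₁ - r * g₂| ≤ na * ε := by
    calc |(na - r) * g₁ - r * g₂| ≤ |(na - r) * g₁| + |r * g₂| := abs_sub _ _
      _ = (na - r) * |g₁| + r * |g₂| := by
          rw [abs_mul, abs_mul, abs_of_nonneg (by linarith : (0:ℝ) ≤ na - r),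
            abs_of_nonneg hr0]
      _ ≤ (na - r) * ε + r * ε := by
          gcongr <;> first | linarith | assumption
      _ = na * ε := by ring
  have hεpos : 0 ≤ ε := by
    apply div_nonneg (mul_nonneg (by linarith) hna.le) hs0.le
  calc |(na - r) * g₁ - r * g₂| ≤ na * ε := hnum
    _ ≤ δ / (4 * Real.sqrt n) * ((na + g₁ + g₂) * na) := by
        rw [hε]
        have h1 : na * (δ / 24 * na / Real.sqrt n) = (δ * na * na / 24) / Real.sqrt n := by
          ring
        have h2 : δ / (4 * Real.sqrt n) * ((na + g₁ + g₂) * na)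
            = (δ * ((na + g₁ + g₂) * na) / 4) / Real.sqrt n := by
          field_simp
        rw [h1, h2]
        gcongr ?_ / Real.sqrt n
        nlinarith [mul_pos hδ0 (mul_pos hna hna)]
end

section
/- Let n > 0, φ ≥ 0, and θ > 0 be real numbers with ζ := 2φ/θ < 1. Let x¹, x², y¹, y² be real numbers with 0 ≤ x¹ ≤ y¹, 0 ≤ x² ≤ y², |x¹ − x²| ≤ 2φn, |y¹ − y²| ≤ 2φn, and y¹ ≥ θn. Then y² > 0 and | x¹/y¹ − x²/y² | ≤ 2ζ/(1 − ζ). -/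
/-- if the test/training counts of a leaf differ by at most `2φn`, the leaf
has at least `θn` test points, and `ζ = 2φ/θ < 1`, then the training count is positive
and the test and training label ratios differ by at most `2ζ/(1 - ζ)`. -/
theorem leaf_ratio_stability
    (n φ θ : ℝ) (hn : 0 < n) (hφ : 0 ≤ φ) (hθ : 0 < θ)
    (hζ : 2 * φ / θ < 1)
    (x₁ x₂ y₁ y₂ : ℝ)
    (hx₁0 : 0 ≤ x₁) (hx₁ : x₁ ≤ y₁)
    (hx₂0 : 0 ≤ x₂) (hx₂ : x₂ ≤ y₂)
    (hxd : |x₁ - x₂| ≤ 2 * φ * n)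
    (hyd : |y₁ - y₂| ≤ 2 * φ * n)
    (hy₁ : θ * n ≤ y₁) :
    0 < y₂ ∧
      |x₁ / y₁ - x₂ / y₂| ≤ 2 * (2 * φ / θ) / (1 - 2 * φ / θ) := by
  have h2φ : 2 * φ < θ := by
    rw [div_lt_one hθ] at hζ; exact hζ
  have hy₁0 : 0 < y₁ := lt_of_lt_of_le (by positivity) hy₁
  obtain ⟨hyd1, hyd2⟩ := abs_le.mp hyd
  obtain ⟨hxd1, hxd2⟩ := abs_le.mp hxd
  have hy₂lb : (θ - 2 * φ) * n ≤ y₂ := by nlinarith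
  have hy₂0 : 0 < y₂ := lt_of_lt_of_le (by nlinarith) hy₂lb
  refine ⟨hy₂0, ?_⟩
  have hrw : x₁ / y₁ - x₂ / y₂ = (x₁ * y₂ - x₂ * y₁) / (y₁ * y₂) := by
    field_simp
  have hnum : |x₁ * y₂ - x₂ * y₁| ≤ 4 * φ * n * y₁ := by
    have key : x₁ * y₂ - x₂ * y₁ = x₁ * (y₂ - y₁) + (x₁ - x₂) * y₁ := by ring
    rw [key]
    calc |x₁ * (y₂ - y₁) + (x₁ - x₂) * y₁|
        ≤ |x₁ * (y₂ - y₁)| + |(x₁ - x₂) * y₁| := abs_add_le _ _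
      _ = x₁ * |y₂ - y₁| + |x₁ - x₂| * y₁ := by
          rw [abs_mul, abs_mul, abs_of_nonneg hx₁0, abs_of_nonneg hy₁0.le]
      _ ≤ y₁ * (2 * φ * n) + (2 * φ * n) * y₁ := by
          have h1 : |y₂ - y₁| ≤ 2 * φ * n := by rw [abs_sub_comm]; exact hyd
          have h2 : 0 ≤ |y₂ - y₁| := abs_nonneg _
          have h3 : 0 ≤ |x₁ - x₂| := abs_nonneg _
          nlinarith
      _ = 4 * φ * n * y₁ := by ring
  rw [hrw, abs_div, abs_of_pos (mul_pos hy₁0 hy₂0)]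
  have hstep : |x₁ * y₂ - x₂ * y₁| / (y₁ * y₂) ≤ 4 * φ / (θ - 2 * φ) := by
    rw [div_le_div_iff₀ (mul_pos hy₁0 hy₂0) (by linarith)]
    have : 4 * φ * n * y₁ * (θ - 2 * φ) ≤ 4 * φ * (y₁ * y₂) := by
      nlinarith [mul_le_mul_of_nonneg_left hy₂lb (by positivity : (0:ℝ) ≤ 4 * φ * y₁)]
    nlinarith [hnum, mul_pos hy₁0 hy₂0]
  have heq : 2 * (2 * φ / θ) / (1 - 2 * φ / θ) = 4 * φ / (θ - 2 * φ) := by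
    have hne : (1 : ℝ) - 2 * φ / θ ≠ 0 := by
      have : (0:ℝ) < 1 - 2 * φ / θ := by linarith
      linarith
    field_simp
    ring
  rw [heq]
  exact hstep
end
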